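/- arXiv:2510.12237 — 6 statements merged into one kernel-verified Lean document; each statement's English description precedes it below -/
import Mathlib

section
/- There exists a constant C > 0 such that for all real T ≥ 1: | T · ∫₀¹ R(x) · e^{T·φ(x)} dx − ( R(1) · e^{i T ∫₀¹ Δ(s) ds} / (Λ(1) + i·Δ(1)) − R(0) · e^{−T ∫₀¹ Λ(s) ds} / (Λ(0) + i·Δ(0)) ) | ≤ C / T. (This is the rigorous content of the key formula Eq. (A26)/(26) for the transition amplitude γ_i(1) in the proof of Theorem 1 of the paper: in the large-T limit, the accumulated transition amplitude reduces, up to an O(1/T) error, to boundary contributions at the start and the end of the adiabatic evolution, the initial contribution being damped by the accumulated decay rate.) -/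
open intervalIntegral Set Complex


/-- The rigorous content of Eq. (A26)/(26) in the proof of Theorem 1 of the paper:
with phase `φ(x) = −∫_x^1 Λ + i ∫_0^x Δ` (so `φ' = Λ + iΔ`), the accumulated transition
amplitude `T ∫₀¹ R e^{Tφ}` reduces, up to an `O(1/T)` error, to the boundary contributions
`R(1) e^{iT∫₀¹Δ}/(Λ(1)+iΔ(1)) − R(0) e^{−T∫₀¹Λ}/(Λ(0)+iΔ(0))`. -/

theorem stmt2 (Λ Δ : ℝ → ℝ) (R : ℝ → ℂ)
    (hΛ : ContDiff ℝ (⊤ : ℕ∞) Λ) (hΔ : ContDiff ℝ (⊤ : ℕ∞) Δ) (hR : ContDiff ℝ (⊤ : ℕ∞) R)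
    (hΛ0 : ∀ x ∈ Set.Icc (0:ℝ) 1, 0 ≤ Λ x)
    (hΔ0 : ∀ x ∈ Set.Icc (0:ℝ) 1, 0 < Δ x)
    (φ : ℝ → ℂ)
    (hφ : ∀ x : ℝ, φ x = -((∫ s in x..(1:ℝ), Λ s : ℝ) : ℂ)
      + Complex.I * ((∫ s in (0:ℝ)..x, Δ s : ℝ) : ℂ)) :
    ∃ C > 0, ∀ T : ℝ, 1 ≤ T →
      ‖(T : ℂ) * (∫ x in (0:ℝ)..1, R x * Complex.exp (T * φ x)) -
        (R 1 * Complex.exp (Complex.I * T * ((∫ s in (0:ℝ)..1, Δ s : ℝ) : ℂ)) /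
            ((Λ 1 : ℂ) + Complex.I * (Δ 1 : ℂ)) -
         R 0 * Complex.exp (-(T * ((∫ s in (0:ℝ)..1, Λ s : ℝ) : ℂ))) /
            ((Λ 0 : ℂ) + Complex.I * (Δ 0 : ℂ)))‖
        ≤ C / T := by
  set ψ : ℝ → ℂ := fun x => (Λ x : ℂ) + Complex.I * (Δ x : ℂ) with hψdef
  have hψC : ContDiff ℝ (⊤ : ℕ∞) ψ := by
    exact (Complex.ofRealCLM.contDiff.comp hΛ).add
      (contDiff_const.mul (Complex.ofRealCLM.contDiff.comp hΔ))
  set U : Set ℝ := {x | ψ x ≠ 0} with hUdef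
  have hU : IsOpen U := isOpen_ne.preimage hψC.continuous
  have hsub : Set.Icc (0:ℝ) 1 ⊆ U := by
    intro x hx h0
    have : (ψ x).im = 0 := by rw [h0]; simp
    simp [hψdef, Complex.add_im, Complex.mul_im] at this
    exact (hΔ0 x hx).ne' this
  set g : ℝ → ℂ := fun x => R x / ψ x with hgdef
  have hgC : ContDiffOn ℝ (⊤ : ℕ∞) g U := by
    have h : ContDiffOn ℝ (⊤ : ℕ∞) (fun x => R x * (ψ x)⁻¹) U :=
      hR.contDiffOn.mul (hψC.contDiffOn.inv fun x hx => hx)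
    simpa [hgdef, div_eq_mul_inv] using h
  set g1 : ℝ → ℂ := deriv g with hg1def
  have hg1C : ContDiffOn ℝ (⊤ : ℕ∞) g1 U := hgC.deriv_of_isOpen hU (by simp)
  set g2 : ℝ → ℂ := fun x => g1 x / ψ x with hg2def
  have hg2C : ContDiffOn ℝ (⊤ : ℕ∞) g2 U := by
    have h : ContDiffOn ℝ (⊤ : ℕ∞) (fun x => g1 x * (ψ x)⁻¹) U :=
      hg1C.mul (hψC.contDiffOn.inv fun x hx => hx)
    simpa [hg2def, div_eq_mul_inv] using h
  set g3 : ℝ → ℂ := deriv g2 with hg3def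
  have hg3C : ContDiffOn ℝ (⊤ : ℕ∞) g3 U := hg2C.deriv_of_isOpen hU (by simp)
  -- derivative of φ
  have hφ' : ∀ x : ℝ, HasDerivAt φ (ψ x) x := by
    intro x
    have hrw : φ = fun x => ((∫ s in (1:ℝ)..x, Λ s : ℝ) : ℂ)
        + Complex.I * ((∫ s in (0:ℝ)..x, Δ s : ℝ) : ℂ) := by
      funext y
      rw [hφ, intervalIntegral.integral_symm]
      push_cast
      ring
    rw [hrw]
    have h1 : HasDerivAt (fun y => (∫ s in (1:ℝ)..y, Λ s : ℝ)) (Λ x) x :=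
      intervalIntegral.integral_hasDerivAt_right
        (hΛ.continuous.intervalIntegrable _ _)
        (hΛ.continuous.stronglyMeasurableAtFilter _ _) hΛ.continuous.continuousAt
    have h2 : HasDerivAt (fun y => (∫ s in (0:ℝ)..y, Δ s : ℝ)) (Δ x) x :=
      intervalIntegral.integral_hasDerivAt_right
        (hΔ.continuous.intervalIntegrable _ _)
        (hΔ.continuous.stronglyMeasurableAtFilter _ _) hΔ.continuous.continuousAt
    exact h1.ofReal_comp.add ((h2.ofReal_comp).const_mul Complex.I)
  have hφcont : Continuous φ := by
    exact continuous_iff_continuousAt.2 fun x => (hφ' x).continuousAt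
  -- derivatives of g, g2 on Icc
  have hgD : ∀ x ∈ Set.Icc (0:ℝ) 1, HasDerivAt g (g1 x) x := fun x hx =>
    (((hgC.differentiableOn (by simp)).differentiableAt
      (hU.mem_nhds (hsub hx)))).hasDerivAt
  have hg2D : ∀ x ∈ Set.Icc (0:ℝ) 1, HasDerivAt g2 (g3 x) x := fun x hx =>
    (((hg2C.differentiableOn (by simp)).differentiableAt
      (hU.mem_nhds (hsub hx)))).hasDerivAt
  -- constants
  obtain ⟨M3, hM3⟩ := (isCompact_Icc).exists_bound_of_continuousOn
    (hg3C.continuousOn.mono hsub)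
  have hM3nn : 0 ≤ M3 := le_trans (norm_nonneg _) (hM3 0 (by norm_num))
  refine ⟨‖g2 1‖ + ‖g2 0‖ + M3 + 1, by positivity, ?_⟩
  intro T hT
  have hT0 : (0:ℝ) < T := lt_of_lt_of_le one_pos hT
  set E : ℝ → ℂ := fun x => Complex.exp (T * φ x) with hEdef
  have hEcont : Continuous E := Complex.continuous_exp.comp (continuous_const.mul hφcont)
  have hED : ∀ x : ℝ, HasDerivAt E ((T * ψ x) * E x) x := fun x => by
    simpa [hEdef, mul_comm] using ((hφ' x).const_mul (T:ℂ)).cexp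
  have hEle : ∀ x ∈ Set.Icc (0:ℝ) 1, ‖E x‖ ≤ 1 := by
    intro x hx
    have hint : 0 ≤ ∫ s in x..(1:ℝ), Λ s := by
      apply intervalIntegral.integral_nonneg hx.2
      intro u hu
      exact hΛ0 u ⟨le_trans hx.1 hu.1, hu.2⟩
    rw [hEdef]
    simp only [Complex.norm_exp]
    have hre : ((T:ℂ) * φ x).re = T * (-(∫ s in x..(1:ℝ), Λ s)) := by
      rw [hφ]
      simp [Complex.mul_re, Complex.mul_im]
    rw [hre, Real.exp_le_one_iff]
    nlinarith
  -- generic integration by parts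
  have key : ∀ h h' : ℝ → ℂ, (∀ x ∈ Set.Icc (0:ℝ) 1, HasDerivAt h (h' x) x) →
      ContinuousOn h' (Set.Icc (0:ℝ) 1) → ContinuousOn h (Set.Icc (0:ℝ) 1) →
      (T:ℂ) * ∫ x in (0:ℝ)..1, (h x * ψ x) * E x
        = h 1 * E 1 - h 0 * E 0 - ∫ x in (0:ℝ)..1, h' x * E x := by
    intro h h' hD hc' hc
    have hEci : ∀ s : Set ℝ, ContinuousOn E s := fun s => hEcont.continuousOn
    have hI1 : IntervalIntegrable (fun x => h' x * E x) MeasureTheory.volume 0 1 := by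
      apply ContinuousOn.intervalIntegrable
      rw [Set.uIcc_of_le (by norm_num : (0:ℝ) ≤ 1)]
      exact hc'.mul (hEci _)
    have hI2 : IntervalIntegrable (fun x => h x * ((T * ψ x) * E x))
        MeasureTheory.volume 0 1 := by
      apply ContinuousOn.intervalIntegrable
      rw [Set.uIcc_of_le (by norm_num : (0:ℝ) ≤ 1)]
      exact hc.mul ((continuousOn_const.mul hψC.continuous.continuousOn).mul (hEci _))
    have hFTC : ∫ x in (0:ℝ)..1, (h' x * E x + h x * ((T * ψ x) * E x))
        = h 1 * E 1 - h 0 * E 0 := by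
      apply intervalIntegral.integral_eq_sub_of_hasDerivAt
        (f := fun x => h x * E x)
        (f' := fun x => h' x * E x + h x * ((T : ℂ) * ψ x * E x))
      · intro x hx
        rw [Set.uIcc_of_le (by norm_num : (0:ℝ) ≤ 1)] at hx
        exact (hD x hx).mul (hED x)
      · exact hI1.add hI2
    rw [intervalIntegral.integral_add hI1 hI2] at hFTC
    have : ∫ x in (0:ℝ)..1, h x * ((T * ψ x) * E x)
        = (T:ℂ) * ∫ x in (0:ℝ)..1, (h x * ψ x) * E x := by
      rw [← intervalIntegral.integral_const_mul]
      apply intervalIntegral.integral_congr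
      intro x _
      ring
    rw [this] at hFTC
    linear_combination hFTC
  have hψne : ∀ x ∈ Set.Icc (0:ℝ) 1, ψ x ≠ 0 := fun x hx => hsub hx
  -- first IBP
  have eqA : (T:ℂ) * ∫ x in (0:ℝ)..1, R x * E x
      = g 1 * E 1 - g 0 * E 0 - ∫ x in (0:ℝ)..1, g1 x * E x := by
    have := key g g1 hgD (hg1C.continuousOn.mono hsub) (hgC.continuousOn.mono hsub)
    rw [← this]
    congr 1
    apply intervalIntegral.integral_congr
    intro x hx
    rw [Set.uIcc_of_le (by norm_num : (0:ℝ) ≤ 1)] at hx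
    rw [hgdef]
    simp only
    rw [div_mul_cancel₀ _ (hψne x hx)]
  -- second IBP
  have eqB : (T:ℂ) * ∫ x in (0:ℝ)..1, g1 x * E x
      = g2 1 * E 1 - g2 0 * E 0 - ∫ x in (0:ℝ)..1, g3 x * E x := by
    have := key g2 g3 hg2D (hg3C.continuousOn.mono hsub) (hg2C.continuousOn.mono hsub)
    rw [← this]
    congr 1
    apply intervalIntegral.integral_congr
    intro x hx
    rw [Set.uIcc_of_le (by norm_num : (0:ℝ) ≤ 1)] at hx
    rw [hg2def]
    simp only
    rw [div_mul_cancel₀ _ (hψne x hx)]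
  -- boundary terms match
  have hbd : R 1 * Complex.exp (Complex.I * T * ((∫ s in (0:ℝ)..1, Δ s : ℝ) : ℂ)) /
            ((Λ 1 : ℂ) + Complex.I * (Δ 1 : ℂ)) -
         R 0 * Complex.exp (-(T * ((∫ s in (0:ℝ)..1, Λ s : ℝ) : ℂ))) /
            ((Λ 0 : ℂ) + Complex.I * (Δ 0 : ℂ))
      = g 1 * E 1 - g 0 * E 0 := by
    have hφ1 : φ 1 = Complex.I * ((∫ s in (0:ℝ)..1, Δ s : ℝ) : ℂ) := by
      rw [hφ]; simp [intervalIntegral.integral_same]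
    have hφ0 : φ 0 = -((∫ s in (0:ℝ)..1, Λ s : ℝ) : ℂ) := by
      rw [hφ]; simp [intervalIntegral.integral_same]
    rw [hgdef, hEdef]
    simp only [hφ1, hφ0, hψdef]
    rw [div_mul_eq_mul_div, div_mul_eq_mul_div]
    ring_nf
  -- conclude
  rw [show (∫ x in (0:ℝ)..1, R x * Complex.exp (T * φ x)) = ∫ x in (0:ℝ)..1, R x * E x
    from rfl, hbd, eqA]
  have hnorm : ‖g 1 * E 1 - g 0 * E 0 - (∫ x in (0:ℝ)..1, g1 x * E x)
      - (g 1 * E 1 - g 0 * E 0)‖ = ‖∫ x in (0:ℝ)..1, g1 x * E x‖ := by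
    rw [show g 1 * E 1 - g 0 * E 0 - (∫ x in (0:ℝ)..1, g1 x * E x)
      - (g 1 * E 1 - g 0 * E 0) = -(∫ x in (0:ℝ)..1, g1 x * E x) by ring, norm_neg]
  rw [hnorm]
  rw [le_div_iff₀ hT0, mul_comm]
  have hTnorm : T * ‖∫ x in (0:ℝ)..1, g1 x * E x‖
      = ‖g2 1 * E 1 - g2 0 * E 0 - ∫ x in (0:ℝ)..1, g3 x * E x‖ := by
    rw [← eqB, norm_mul, Complex.norm_real, Real.norm_of_nonneg hT0.le]
  rw [hTnorm]
  have hInt3 : ‖∫ x in (0:ℝ)..1, g3 x * E x‖ ≤ M3 := by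
    have := intervalIntegral.norm_integral_le_of_norm_le_const
      (C := M3) (f := fun x => g3 x * E x) (a := (0:ℝ)) (b := 1) ?_
    · simpa using this
    · intro x hx
      rw [Set.uIoc_of_le (by norm_num : (0:ℝ) ≤ 1)] at hx
      have hx' : x ∈ Set.Icc (0:ℝ) 1 := ⟨hx.1.le, hx.2⟩
      calc ‖g3 x * E x‖ = ‖g3 x‖ * ‖E x‖ := norm_mul _ _
        _ ≤ M3 * 1 := mul_le_mul (hM3 x hx') (hEle x hx') (norm_nonneg _) hM3nn
        _ = M3 := mul_one _
  calc ‖g2 1 * E 1 - g2 0 * E 0 - ∫ x in (0:ℝ)..1, g3 x * E x‖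
      ≤ ‖g2 1 * E 1 - g2 0 * E 0‖ + ‖∫ x in (0:ℝ)..1, g3 x * E x‖ := norm_sub_le _ _
    _ ≤ (‖g2 1 * E 1‖ + ‖g2 0 * E 0‖) + M3 := add_le_add (norm_sub_le _ _) hInt3
    _ ≤ (‖g2 1‖ * 1 + ‖g2 0‖ * 1) + M3 := by
        gcongr
        · rw [norm_mul]
          exact mul_le_mul_of_nonneg_left (hEle 1 (by norm_num)) (norm_nonneg _)
        · rw [norm_mul]
          exact mul_le_mul_of_nonneg_left (hEle 0 (by norm_num)) (norm_nonneg _)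
    _ ≤ ‖g2 1‖ + ‖g2 0‖ + M3 + 1 := by simp only [mul_one]; linarith
end

section
/- Let Q be a natural number and suppose in addition that the iterated derivatives of ψ vanish at both endpoints up to order Q−1, i.e. ψ^{(q)}(0) = ψ^{(q)}(1) = 0 for every 0 ≤ q ≤ Q−1. Then there exists a constant C > 0 such that for all real λ ≥ 1: | ∫₀¹ e^{λ·φ(x)} ψ(x) dx | ≤ C · λ^{−(Q+1)}. (This is the analytic core of Theorem 4 of the paper: for a Q-th order adiabatic path, whose transition amplitude vanishes to order Q−1 at the endpoints, all boundary terms of the oscillatory-integral expansion up to order Q vanish, so the infidelity amplitude is suppressed to O(T^{−(Q+1)}).) -/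
open intervalIntegral Set

/-- If `f` and all its derivatives up to order `m` vanish at `e`, then the `m`-th
iterated derivative of `f * h` vanishes at `e`. -/
private lemma vanish_mul (e : ℝ) : ∀ (m : ℕ) (f h : ℝ → ℂ), ContDiff ℝ (⊤:ℕ∞) f → ContDiff ℝ (⊤:ℕ∞) h →
    (∀ q ≤ m, iteratedDeriv q f e = 0) → iteratedDeriv m (fun x => f x * h x) e = 0 := by
  intro m
  induction m with
  | zero =>
    intro f h _ _ hv
    have h0 := hv 0 le_rfl
    simp only [iteratedDeriv_zero] at h0 ⊢
    simp [h0]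
  | succ m ih =>
    intro f h hf hh hv
    rw [iteratedDeriv_succ']
    have hEq : deriv (fun x => f x * h x) = fun x => deriv f x * h x + f x * deriv h x := by
      funext x
      exact ((hf.differentiable (by norm_num) x).hasDerivAt.mul
        (hh.differentiable (by norm_num) x).hasDerivAt).deriv
    rw [hEq]
    have hf' : ContDiff ℝ (⊤:ℕ∞) (deriv f) := (contDiff_infty_iff_deriv.mp hf).2
    have hh' : ContDiff ℝ (⊤:ℕ∞) (deriv h) := (contDiff_infty_iff_deriv.mp hh).2
    have h1 : iteratedDeriv m (fun x => deriv f x * h x) e = 0 :=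
      ih (deriv f) h hf' hh (fun q hq => by
        rw [← iteratedDeriv_succ']; exact hv (q+1) (Nat.succ_le_succ hq))
    have h2 : iteratedDeriv m (fun x => f x * deriv h x) e = 0 :=
      ih f (deriv h) hf hh' (fun q hq => hv q (le_trans hq (Nat.le_succ m)))
    have hadd : iteratedDeriv m (fun x => deriv f x * h x + f x * deriv h x) e =
        iteratedDeriv m (fun x => deriv f x * h x) e +
        iteratedDeriv m (fun x => f x * deriv h x) e := by
      have c1 : ContDiff ℝ (⊤:ℕ∞) (fun x => deriv f x * h x) := hf'.mul hh
      have c2 : ContDiff ℝ (⊤:ℕ∞) (fun x => f x * deriv h x) := hf.mul hh'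
      have := iteratedFDeriv_add_apply (i := m) (x := e)
        ((c1.contDiffAt (x := e)).of_le (by exact_mod_cast le_top)) ((c2.contDiffAt (x := e)).of_le (by exact_mod_cast le_top))
      simp only [iteratedDeriv_eq_iteratedFDeriv, Pi.add_def] at *
      rw [this]
      simp
    rw [hadd, h1, h2, add_zero]

/-- Integration by parts identity for the oscillatory integral. -/
private lemma ibp (φ g : ℝ → ℂ) (hφ : ContDiff ℝ (⊤:ℕ∞) φ) (hg : ContDiff ℝ (⊤:ℕ∞) g) (lam : ℝ) :
    ∫ x in (0:ℝ)..1, ((lam : ℂ) * deriv φ x) * Complex.exp (lam * φ x) * g x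
      = Complex.exp (lam * φ 1) * g 1 - Complex.exp (lam * φ 0) * g 0
        - ∫ x in (0:ℝ)..1, Complex.exp (lam * φ x) * deriv g x := by
  have hφd : Differentiable ℝ φ := hφ.differentiable (by norm_num)
  have hgd : Differentiable ℝ g := hg.differentiable (by norm_num)
  have hφ' : Continuous (deriv φ) := ((contDiff_infty_iff_deriv.mp hφ).2).continuous
  have hg' : Continuous (deriv g) := ((contDiff_infty_iff_deriv.mp hg).2).continuous
  set u : ℝ → ℂ := fun x => Complex.exp (lam * φ x) with hu
  have hcu : Continuous u := Complex.continuous_exp.comp (continuous_const.mul hφd.continuous)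
  have huder : ∀ x : ℝ, HasDerivAt u (((lam : ℂ) * deriv φ x) * Complex.exp (lam * φ x)) x := by
    intro x
    have h1 : HasDerivAt (fun y => (lam : ℂ) * φ y) ((lam : ℂ) * deriv φ x) x :=
      (hφd x).hasDerivAt.const_mul _
    have := h1.cexp
    simpa [hu, mul_comm] using this
  have key := integral_deriv_mul_eq_sub (u := u) (v := g)
    (u' := fun x => ((lam : ℂ) * deriv φ x) * Complex.exp (lam * φ x))
    (v' := deriv g)
    (fun x _ => huder x) (fun x _ => (hgd x).hasDerivAt)
    (((continuous_const.mul hφ').mul hcu).intervalIntegrable 0 1)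
    (hg'.intervalIntegrable 0 1)
  have hsplit : (∫ x in (0:ℝ)..1,
      (((lam : ℂ) * deriv φ x) * Complex.exp (lam * φ x) * g x + u x * deriv g x))
      = (∫ x in (0:ℝ)..1, ((lam : ℂ) * deriv φ x) * Complex.exp (lam * φ x) * g x)
        + ∫ x in (0:ℝ)..1, u x * deriv g x := by
    apply integral_add
    · exact (((continuous_const.mul hφ').mul hcu).mul hgd.continuous).intervalIntegrable 0 1
    · exact (hcu.mul hg').intervalIntegrable 0 1
  rw [hsplit] at key
  rw [hu] at key
  linear_combination key

private lemma core (φ : ℝ → ℂ) (hφ : ContDiff ℝ (⊤:ℕ∞) φ)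
    (hRe : ∀ x ∈ Set.Icc (0:ℝ) 1, (φ x).re ≤ 0)
    (hne : ∀ x : ℝ, deriv φ x ≠ 0) :
    ∀ Q : ℕ, ∀ ψ : ℝ → ℂ, ContDiff ℝ (⊤:ℕ∞) ψ →
    (∀ q < Q, iteratedDeriv q ψ 0 = 0 ∧ iteratedDeriv q ψ 1 = 0) →
    ∃ C > 0, ∀ lam : ℝ, 1 ≤ lam →
      ‖∫ x in (0:ℝ)..1, Complex.exp (lam * φ x) * ψ x‖ ≤ C / lam^(Q+1) := by
  have hφ' : ContDiff ℝ (⊤:ℕ∞) (deriv φ) := (contDiff_infty_iff_deriv.mp hφ).2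
  intro Q
  induction Q with
  | zero =>
    intro ψ hψ _
    set g : ℝ → ℂ := fun x => ψ x * (deriv φ x)⁻¹ with hgdef
    have hg : ContDiff ℝ (⊤:ℕ∞) g := hψ.mul (hφ'.inv hne)
    have hg' : Continuous (deriv g) := ((contDiff_infty_iff_deriv.mp hg).2).continuous
    obtain ⟨M, hM⟩ := (isCompact_Icc (a := (0:ℝ)) (b := 1)).exists_bound_of_continuousOn
      hg'.continuousOn
    refine ⟨‖g 1‖ + ‖g 0‖ + max M 0 + 1, by positivity, ?_⟩
    intro lam hlam
    have hlam0 : (0:ℝ) < lam := lt_of_lt_of_le one_pos hlam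
    have hexp : ∀ x ∈ Set.Icc (0:ℝ) 1, ‖Complex.exp (lam * φ x)‖ ≤ 1 := by
      intro x hx
      rw [Complex.norm_exp]
      have : ((lam : ℂ) * φ x).re = lam * (φ x).re := by simp
      rw [this]
      exact Real.exp_le_one_iff.mpr (mul_nonpos_of_nonneg_of_nonpos hlam0.le (hRe x hx))
    have hid := ibp φ g hφ hg lam
    have hLHS : (∫ x in (0:ℝ)..1, ((lam : ℂ) * deriv φ x) * Complex.exp (lam * φ x) * g x)
        = (lam : ℂ) * ∫ x in (0:ℝ)..1, Complex.exp (lam * φ x) * ψ x := by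
      rw [← intervalIntegral.integral_const_mul]
      apply intervalIntegral.integral_congr
      intro x _
      calc (lam : ℂ) * deriv φ x * Complex.exp (lam * φ x) * (ψ x * (deriv φ x)⁻¹)
          = (lam : ℂ) * Complex.exp (lam * φ x) * ψ x * (deriv φ x * (deriv φ x)⁻¹) := by ring
        _ = (lam : ℂ) * Complex.exp (lam * φ x) * ψ x := by
            rw [mul_inv_cancel₀ (hne x), mul_one]
        _ = (fun x => (lam : ℂ) * (Complex.exp (lam * φ x) * ψ x)) x := by
            beta_reduce; ring
    rw [hLHS] at hid
    have hlamne : (lam : ℂ) ≠ 0 := by exact_mod_cast hlam0.ne'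
    have hnorm : ‖(lam : ℂ) * ∫ x in (0:ℝ)..1, Complex.exp (lam * φ x) * ψ x‖
        = lam * ‖∫ x in (0:ℝ)..1, Complex.exp (lam * φ x) * ψ x‖ := by
      rw [norm_mul, Complex.norm_real, Real.norm_of_nonneg hlam0.le]
    have hbi : ‖∫ x in (0:ℝ)..1, Complex.exp (lam * φ x) * deriv g x‖ ≤ max M 0 := by
      have := intervalIntegral.norm_integral_le_of_norm_le_const
        (C := max M 0) (f := fun x => Complex.exp (lam * φ x) * deriv g x)
        (a := (0:ℝ)) (b := 1) ?_
      · simpa using this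
      · intro x hx
        rw [Set.uIoc_of_le (by norm_num : (0:ℝ) ≤ 1)] at hx
        have hx' : x ∈ Set.Icc (0:ℝ) 1 := ⟨hx.1.le, hx.2⟩
        calc ‖Complex.exp (lam * φ x) * deriv g x‖
            = ‖Complex.exp (lam * φ x)‖ * ‖deriv g x‖ := norm_mul _ _
          _ ≤ 1 * max M 0 := by
              exact mul_le_mul (hexp x hx') (le_trans (hM x hx') (le_max_left _ _))
                (norm_nonneg _) zero_le_one
          _ = max M 0 := one_mul _
    have hb : ‖(lam : ℂ) * ∫ x in (0:ℝ)..1, Complex.exp (lam * φ x) * ψ x‖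
        ≤ ‖g 1‖ + ‖g 0‖ + max M 0 := by
      rw [hid]
      calc ‖Complex.exp (lam * φ 1) * g 1 - Complex.exp (lam * φ 0) * g 0
            - ∫ x in (0:ℝ)..1, Complex.exp (lam * φ x) * deriv g x‖
          ≤ ‖Complex.exp (lam * φ 1) * g 1‖ + ‖Complex.exp (lam * φ 0) * g 0‖
            + ‖∫ x in (0:ℝ)..1, Complex.exp (lam * φ x) * deriv g x‖ := by
            refine le_trans (norm_sub_le _ _) ?_
            gcongr
            exact norm_sub_le _ _
        _ ≤ ‖g 1‖ + ‖g 0‖ + max M 0 := by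
            gcongr
            · calc ‖Complex.exp (lam * φ 1) * g 1‖ = ‖Complex.exp (lam * φ 1)‖ * ‖g 1‖ :=
                  norm_mul _ _
                _ ≤ 1 * ‖g 1‖ := by
                    exact mul_le_mul_of_nonneg_right
                      (hexp 1 (by norm_num)) (norm_nonneg _)
                _ = ‖g 1‖ := one_mul _
            · calc ‖Complex.exp (lam * φ 0) * g 0‖ = ‖Complex.exp (lam * φ 0)‖ * ‖g 0‖ :=
                  norm_mul _ _
                _ ≤ 1 * ‖g 0‖ := by
                    exact mul_le_mul_of_nonneg_right
                      (hexp 0 (by norm_num)) (norm_nonneg _)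
                _ = ‖g 0‖ := one_mul _
    rw [hnorm] at hb
    rw [pow_one, le_div_iff₀ hlam0]
    calc ‖∫ x in (0:ℝ)..1, Complex.exp (lam * φ x) * ψ x‖ * lam
        = lam * ‖∫ x in (0:ℝ)..1, Complex.exp (lam * φ x) * ψ x‖ := mul_comm _ _
      _ ≤ ‖g 1‖ + ‖g 0‖ + max M 0 := hb
      _ ≤ ‖g 1‖ + ‖g 0‖ + max M 0 + 1 := by linarith
  | succ Q ih =>
    intro ψ hψ hv
    set g : ℝ → ℂ := fun x => ψ x * (deriv φ x)⁻¹ with hgdef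
    have hg : ContDiff ℝ (⊤:ℕ∞) g := hψ.mul (hφ'.inv hne)
    have hgderiv : ContDiff ℝ (⊤:ℕ∞) (deriv g) := (contDiff_infty_iff_deriv.mp hg).2
    have hvg : ∀ q < Q, iteratedDeriv q (deriv g) 0 = 0 ∧ iteratedDeriv q (deriv g) 1 = 0 := by
      intro q hq
      have h0 : iteratedDeriv (q+1) g 0 = 0 :=
        vanish_mul 0 (q+1) ψ (fun x => (deriv φ x)⁻¹) hψ (hφ'.inv hne)
          (fun j hj => (hv j (lt_of_le_of_lt hj (Nat.succ_lt_succ hq))).1)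
      have h1 : iteratedDeriv (q+1) g 1 = 0 :=
        vanish_mul 1 (q+1) ψ (fun x => (deriv φ x)⁻¹) hψ (hφ'.inv hne)
          (fun j hj => (hv j (lt_of_le_of_lt hj (Nat.succ_lt_succ hq))).2)
      rw [iteratedDeriv_succ'] at h0 h1
      exact ⟨h0, h1⟩
    obtain ⟨C, hC, hbound⟩ := ih (deriv g) hgderiv hvg
    refine ⟨C, hC, ?_⟩
    intro lam hlam
    have hlam0 : (0:ℝ) < lam := lt_of_lt_of_le one_pos hlam
    have hid := ibp φ g hφ hg lam
    have hψ0 : ψ 0 = 0 := by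
      have := (hv 0 (Nat.succ_pos Q)).1; rwa [iteratedDeriv_zero] at this
    have hψ1 : ψ 1 = 0 := by
      have := (hv 0 (Nat.succ_pos Q)).2; rwa [iteratedDeriv_zero] at this
    have hg0 : g 0 = 0 := by simp [hgdef, hψ0]
    have hg1 : g 1 = 0 := by simp [hgdef, hψ1]
    have hLHS : (∫ x in (0:ℝ)..1, ((lam : ℂ) * deriv φ x) * Complex.exp (lam * φ x) * g x)
        = (lam : ℂ) * ∫ x in (0:ℝ)..1, Complex.exp (lam * φ x) * ψ x := by
      rw [← intervalIntegral.integral_const_mul]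
      apply intervalIntegral.integral_congr
      intro x _
      calc (lam : ℂ) * deriv φ x * Complex.exp (lam * φ x) * (ψ x * (deriv φ x)⁻¹)
          = (lam : ℂ) * Complex.exp (lam * φ x) * ψ x * (deriv φ x * (deriv φ x)⁻¹) := by ring
        _ = (lam : ℂ) * Complex.exp (lam * φ x) * ψ x := by
            rw [mul_inv_cancel₀ (hne x), mul_one]
        _ = (fun x => (lam : ℂ) * (Complex.exp (lam * φ x) * ψ x)) x := by
            beta_reduce; ring
    rw [hLHS, hg0, hg1] at hid
    simp only [mul_zero, zero_sub, sub_zero] at hid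
    have hnorm : lam * ‖∫ x in (0:ℝ)..1, Complex.exp (lam * φ x) * ψ x‖
        = ‖∫ x in (0:ℝ)..1, Complex.exp (lam * φ x) * deriv g x‖ := by
      have h2 : ‖(lam:ℂ) * ∫ x in (0:ℝ)..1, Complex.exp (lam * φ x) * ψ x‖
          = ‖-∫ x in (0:ℝ)..1, Complex.exp (lam * φ x) * deriv g x‖ := by rw [hid]
      rwa [norm_mul, Complex.norm_real, Real.norm_of_nonneg hlam0.le, norm_neg] at h2
    have hi := hbound lam hlam
    rw [← hnorm] at hi
    calc ‖∫ x in (0:ℝ)..1, Complex.exp (lam * φ x) * ψ x‖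
        = (lam * ‖∫ x in (0:ℝ)..1, Complex.exp (lam * φ x) * ψ x‖) / lam := by
          field_simp
      _ ≤ (C / lam ^ (Q + 1)) / lam := by gcongr
      _ = C / lam ^ (Q + 1 + 1) := by rw [div_div, ← pow_succ]

/-- The analytic core of Theorem 4 of the paper: if the amplitude `ψ` vanishes at both
endpoints together with its iterated derivatives up to order `Q−1` (i.e. for all `q < Q`),
then all boundary terms of the oscillatory-integral expansion up to order `Q` vanish, so
`|∫₀¹ e^{λφ} ψ| ≤ C λ^{−(Q+1)}` for `λ ≥ 1`. -/
theorem stmt4 (φ ψ : ℝ → ℂ) (hφ : ContDiff ℝ (⊤ : ℕ∞) φ) (hψ : ContDiff ℝ (⊤ : ℕ∞) ψ)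
    (hRe : ∀ x ∈ Set.Icc (0:ℝ) 1, (φ x).re ≤ 0)
    (hIm : ∀ x ∈ Set.Icc (0:ℝ) 1, 0 < (deriv φ x).im)
    (hne : ∀ x : ℝ, deriv φ x ≠ 0)
    (Q : ℕ)
    (hvanish : ∀ q : ℕ, q < Q →
      iteratedDeriv q ψ 0 = 0 ∧ iteratedDeriv q ψ 1 = 0) :
    ∃ C > 0, ∀ lam : ℝ, 1 ≤ lam →
      ‖∫ x in (0:ℝ)..1, Complex.exp (lam * φ x) * ψ x‖ ≤ C / lam^(Q+1) := by
  exact core φ (hφ.of_le (by simp)) hRe hne Q ψ (hψ.of_le (by simp)) hvanish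
end

section
/- Suppose u is differentiable at x₀; φ₀ : ℝ → ℂⁿ and E₀ : ℝ → ℝ are differentiable at x₀ and satisfy the instantaneous eigenvalue equation H(x)·φ₀(x) = E₀(x)·φ₀(x) for all x in some neighborhood of x₀; and φᵢ ∈ ℂⁿ, Eᵢ ∈ ℝ satisfy H(x₀)·φᵢ = Eᵢ·φᵢ with Eᵢ ≠ E₀(x₀) and ⟨φᵢ, φ₀(x₀)⟩ = 0. Then the overlap of φᵢ with the derivative of the eigenpath satisfies ⟨φᵢ, φ₀'(x₀)⟩ = u'(x₀) · ⟨φᵢ, (H_f − H_i)(φ₀(x₀))⟩ / (E₀(x₀) − Eᵢ). (This is Lemma A.3 of the paper: the first-order perturbation-theory formula expressing the non-adiabatic coupling ⟨φᵢ|φ̇₀⟩ in terms of the matrix element of u̇·H' divided by the energy gap.) -/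
/-!
Differentiate the eigenvalue equation `H(x) φ₀(x) = E₀(x) φ₀(x)` at `x₀`:
`H(x₀) φ₀' + u'(x₀) (H_f − H_i) φ₀ = E₀ φ₀' + E₀' φ₀`. Pairing with `φᵢ` kills the `E₀'` term by
orthogonality, and symmetry of `H(x₀)` turns `⟪φᵢ, H(x₀) φ₀'⟫` into `Eᵢ ⟪φᵢ, φ₀'⟫`; dividing by the
gap `E₀ − Eᵢ` gives the formula.
-/

open scoped InnerProductSpace

theorem LinearMap.IsSymmetric.inner_eq_div_of_differentiated_eigen_eq
    {𝕜 E : Type*} [RCLike 𝕜] [NormedAddCommGroup E] [InnerProductSpace 𝕜 E]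
    {T : E →ₗ[𝕜] E} (hT : T.IsSymmetric) {v d w φ : E} {μ μ' ν : ℝ}
    (hdiff : T d + w = (μ : 𝕜) • d + (μ' : 𝕜) • v) (hφ : T φ = (ν : 𝕜) • φ)
    (horth : ⟪φ, v⟫_𝕜 = 0) (hgap : ν ≠ μ) :
    ⟪φ, d⟫_𝕜 = ⟪φ, w⟫_𝕜 / ((μ : 𝕜) - ν) := by
  have hpair := congrArg (fun z => ⟪φ, z⟫_𝕜) hdiff
  simp only [inner_add_right, inner_smul_right, horth, mul_zero, add_zero, ← hT φ d, hφ,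
    inner_smul_left, RCLike.conj_ofReal] at hpair
  have hgap' : (μ : 𝕜) - ν ≠ 0 := sub_ne_zero.2 (by exact_mod_cast hgap.symm)
  rw [eq_div_iff hgap']
  linear_combination -hpair

theorem LinearMap.hasDerivAt_apply_of_hasDerivAt
    {E F : Type*} [NormedAddCommGroup E] [NormedSpace ℂ E] [FiniteDimensional ℂ E]
    [NormedAddCommGroup F] [NormedSpace ℂ F] (A : E →ₗ[ℂ] F) {φ : ℝ → E} {d : E} {x : ℝ}
    (hφ : HasDerivAt φ d x) : HasDerivAt (fun y => A (φ y)) (A d) x :=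
  ((LinearMap.toContinuousLinearMap A).restrictScalars ℝ).hasFDerivAt.comp_hasDerivAt x hφ

theorem hasDerivAt_interpolation_apply
    {E F : Type*} [NormedAddCommGroup E] [NormedSpace ℂ E] [FiniteDimensional ℂ E]
    [NormedAddCommGroup F] [NormedSpace ℂ F] (A B : E →ₗ[ℂ] F) {u : ℝ → ℝ} {u' : ℝ}
    {φ : ℝ → E} {d : E} {x : ℝ} (hu : HasDerivAt u u' x) (hφ : HasDerivAt φ d x) :
    HasDerivAt (fun y => (((1 - u y : ℝ) : ℂ) • A + ((u y : ℝ) : ℂ) • B) (φ y))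
      ((((1 - u x : ℝ) : ℂ) • A + ((u x : ℝ) : ℂ) • B) d + (u' : ℂ) • (B - A) (φ x)) x := by
  have hsplit : ∀ y, (((1 - u y : ℝ) : ℂ) • A + ((u y : ℝ) : ℂ) • B) =
      A + ((u y : ℝ) : ℂ) • (B - A) := fun y => by
    push_cast; module
  simp only [hsplit]
  convert (A.hasDerivAt_apply_of_hasDerivAt hφ).add
    (hu.ofReal_comp.smul ((B - A).hasDerivAt_apply_of_hasDerivAt hφ)) using 1
  · rfl
  · rw [LinearMap.add_apply, LinearMap.smul_apply, add_assoc]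

theorem stmt5_general (n : ℕ)
    (Hi Hf : EuclideanSpace ℂ (Fin n) →ₗ[ℂ] EuclideanSpace ℂ (Fin n))
    (hHi : Hi.IsSymmetric) (hHf : Hf.IsSymmetric)
    (u : ℝ → ℝ)
    (H : ℝ → (EuclideanSpace ℂ (Fin n) →ₗ[ℂ] EuclideanSpace ℂ (Fin n)))
    (hH : ∀ x : ℝ, H x = ((1 - u x : ℝ) : ℂ) • Hi + ((u x : ℝ) : ℂ) • Hf)
    (x₀ : ℝ) (hu : DifferentiableAt ℝ u x₀)
    (φ₀ : ℝ → EuclideanSpace ℂ (Fin n)) (E₀ : ℝ → ℝ)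
    (hφ₀ : DifferentiableAt ℝ φ₀ x₀) (hE₀ : DifferentiableAt ℝ E₀ x₀)
    (heig : ∀ᶠ x in nhds x₀, (H x) (φ₀ x) = (E₀ x : ℂ) • φ₀ x)
    (φi : EuclideanSpace ℂ (Fin n)) (Ei : ℝ)
    (heigi : (H x₀) φi = (Ei : ℂ) • φi)
    (hgap : Ei ≠ E₀ x₀)
    (horth : ⟪φi, φ₀ x₀⟫_ℂ = 0) :
    ⟪φi, deriv φ₀ x₀⟫_ℂ =
      ((deriv u x₀ : ℝ) : ℂ) * ⟪φi, (Hf - Hi) (φ₀ x₀)⟫_ℂ / ((E₀ x₀ : ℂ) - (Ei : ℂ)) := by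
  obtain rfl : H = fun x => ((1 - u x : ℝ) : ℂ) • Hi + ((u x : ℝ) : ℂ) • Hf := funext hH
  have hlhs := hasDerivAt_interpolation_apply Hi Hf hu.hasDerivAt hφ₀.hasDerivAt
  have hrhs := hE₀.hasDerivAt.ofReal_comp.smul hφ₀.hasDerivAt
  have hsymm : (((1 - u x₀ : ℝ) : ℂ) • Hi + ((u x₀ : ℝ) : ℂ) • Hf).IsSymmetric :=
    (hHi.smul (Complex.conj_ofReal _)).add (hHf.smul (Complex.conj_ofReal _))
  rw [hsymm.inner_eq_div_of_differentiated_eigen_eq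
    (hlhs.unique (hrhs.congr_of_eventuallyEq heig)) heigi horth hgap, inner_smul_right]
  rfl -- the two sides differ only by `RCLike.ofReal` versus `Complex.ofReal`

/-- Lemma A.3 of the paper: the first-order perturbation-theory formula expressing the
non-adiabatic coupling `⟨φᵢ|φ̇₀⟩` in terms of the matrix element of `u̇·H' = u̇·(H_f − H_i)`
divided by the energy gap, for the interpolating Hamiltonian
`H(x) = (1 − u(x))·H_i + u(x)·H_f`. -/
theorem stmt5 (n : ℕ) (hn : 1 ≤ n)
    (Hi Hf : EuclideanSpace ℂ (Fin n) →ₗ[ℂ] EuclideanSpace ℂ (Fin n))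
    (hHi : Hi.IsSymmetric) (hHf : Hf.IsSymmetric)
    (u : ℝ → ℝ)
    (H : ℝ → (EuclideanSpace ℂ (Fin n) →ₗ[ℂ] EuclideanSpace ℂ (Fin n)))
    (hH : ∀ x : ℝ, H x = ((1 - u x : ℝ) : ℂ) • Hi + ((u x : ℝ) : ℂ) • Hf)
    (x₀ : ℝ) (hu : DifferentiableAt ℝ u x₀)
    (φ₀ : ℝ → EuclideanSpace ℂ (Fin n)) (E₀ : ℝ → ℝ)
    (hφ₀ : DifferentiableAt ℝ φ₀ x₀) (hE₀ : DifferentiableAt ℝ E₀ x₀)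
    (heig : ∀ᶠ x in nhds x₀, (H x) (φ₀ x) = (E₀ x : ℂ) • φ₀ x)
    (φi : EuclideanSpace ℂ (Fin n)) (Ei : ℝ)
    (heigi : (H x₀) φi = (Ei : ℂ) • φi)
    (hgap : Ei ≠ E₀ x₀)
    (horth : ⟪φi, φ₀ x₀⟫_ℂ = 0) :
    ⟪φi, deriv φ₀ x₀⟫_ℂ =
      ((deriv u x₀ : ℝ) : ℂ) * ⟪φi, (Hf - Hi) (φ₀ x₀)⟫_ℂ / ((E₀ x₀ : ℂ) - (Ei : ℂ)) :=
  stmt5_general n Hi Hf hHi hHf u H hH x₀ hu φ₀ E₀ hφ₀ hE₀ heig φi Ei heigi hgap horth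
end

section
/- The kernel of H, viewed as a linear map on ℂᴺ ⊕ ℂᴺ, is exactly the two-dimensional subspace spanned by the two vectors (p⁻¹·b̄, 0) and (0, b̄). (This is the paper's claim for the adiabatic linear-systems solver: the zero-eigenvalue subspace of the Hamiltonian H(s) is spanned by |1, x(s)⟩ and |0, b̄⟩, where |x(s)⟩ ∝ A(s)⁻¹|b̄⟩ encodes the instantaneous solution of the linear system.) -/
open scoped Matrix

/-!
`P = 1 - b̄ b̄†` has kernel `ℂ ∙ b̄` because `b̄† b̄ = 1`. Multiplying by the invertible `p` on the
left does not change a kernel, and on the right pulls it back along `p`, so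
`ker (p P) = ℂ ∙ b̄` and `ker (P p) = ℂ ∙ p⁻¹ b̄`. Since `H` is block off-diagonal, its kernel is
`ker (P p) ⊕ ker (p P)`, spanned by two nonzero vectors supported on different summands.
-/

open Matrix Submodule

variable {R K : Type*} [CommRing R] [Field K] {l m n : Type*}

theorem Matrix.mulVec_one_sub_vecMulVec [Fintype n] [DecidableEq n] (b c y : n → R) :
    (1 - vecMulVec b c) *ᵥ y = y - (c ⬝ᵥ y) • b := by
  rw [sub_mulVec, one_mulVec, vecMulVec_mulVec, op_smul_eq_smul]

theorem Matrix.ker_mulVecLin_one_sub_vecMulVec [Fintype n] [DecidableEq n] {b c : n → R}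
    (hcb : c ⬝ᵥ b = 1) : LinearMap.ker (1 - vecMulVec b c).mulVecLin = R ∙ b := by
  ext y
  rw [LinearMap.mem_ker, mulVecLin_apply, mulVec_one_sub_vecMulVec, sub_eq_zero,
    mem_span_singleton]
  constructor
  · exact fun h => ⟨c ⬝ᵥ y, h.symm⟩
  · rintro ⟨a, rfl⟩
    rw [dotProduct_smul, hcb, smul_eq_mul, mul_one]

theorem Matrix.ker_mulVecLin_mul_of_isUnit_det_left [Fintype m] [Fintype n] [DecidableEq n]
    {A : Matrix n n K} (hA : IsUnit A.det) (B : Matrix n m K) :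
    LinearMap.ker (A * B).mulVecLin = LinearMap.ker B.mulVecLin := by
  rw [mulVecLin_mul, LinearMap.ker_comp_of_ker_eq_bot _ (LinearMap.ker_eq_bot.mpr _)]
  exact mulVec_injective_iff_isUnit.mpr ((isUnit_iff_isUnit_det A).mpr hA)

theorem Matrix.ker_mulVecLin_mul_of_isUnit_det_right [Fintype n] [DecidableEq n]
    {A : Matrix n n K} (hA : IsUnit A.det) {B : Matrix m n K} {b : n → K}
    (hB : LinearMap.ker B.mulVecLin = K ∙ b) :
    LinearMap.ker (B * A).mulVecLin = K ∙ (A⁻¹ *ᵥ b) := by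
  ext x
  rw [LinearMap.mem_ker, mulVecLin_apply, ← mulVec_mulVec, ← mulVecLin_apply, ← LinearMap.mem_ker,
    hB, mem_span_singleton, mem_span_singleton]
  refine exists_congr fun a => ?_
  rw [← mulVec_smul]
  constructor
  · rintro h; rw [h, mulVec_mulVec, nonsing_inv_mul _ hA, one_mulVec]
  · rintro rfl; rw [mulVec_mulVec, mul_nonsing_inv _ hA, one_mulVec]

theorem Matrix.ker_mulVecLin_fromBlocks_zero_zero [Fintype m] [Fintype n] {A : Matrix l n K}
    {B : Matrix n m K} {x : m → K} {y : n → K} (hA : LinearMap.ker A.mulVecLin = K ∙ y)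
    (hB : LinearMap.ker B.mulVecLin = K ∙ x) :
    LinearMap.ker (fromBlocks 0 A B 0).mulVecLin =
      span K {Sum.elim x 0, Sum.elim (0 : m → K) y} := by
  ext v
  have hv : v ∈ LinearMap.ker (fromBlocks 0 A B 0).mulVecLin ↔
      v ∘ Sum.inl ∈ LinearMap.ker B.mulVecLin ∧ v ∘ Sum.inr ∈ LinearMap.ker A.mulVecLin := by
    simp only [LinearMap.mem_ker, mulVecLin_apply, fromBlocks_mulVec, zero_mulVec, zero_add,
      add_zero, ← Sum.elim_zero_zero, Sum.elim_eq_iff, and_comm]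
  rw [hv, hA, hB, mem_span_singleton, mem_span_singleton, mem_span_pair]
  constructor
  · rintro ⟨⟨a, ha⟩, c, hc⟩
    refine ⟨a, c, ?_⟩
    rw [← Sum.elim_comp_inl_inr v, ← ha, ← hc]
    ext (i | i) <;> simp
  · rintro ⟨a, c, rfl⟩
    exact ⟨⟨a, by ext; simp⟩, c, by ext; simp⟩

theorem finrank_span_sumElim_pair {x : m → K} {y : n → K} (hx : x ≠ 0) (hy : y ≠ 0) :
    Module.finrank K (span K {Sum.elim x 0, Sum.elim (0 : m → K) y}) = 2 := by
  have hli : LinearIndependent K ![Sum.elim x 0, Sum.elim (0 : m → K) y] := by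
    refine (LinearIndependent.pair_iff' ?_).mpr fun a h => hy ?_
    · exact fun h => hx (funext fun i => by simpa using congr_fun h (Sum.inl i))
    · funext i
      simpa using (congr_fun h (Sum.inr i)).symm
  rw [← range_cons_cons_empty _ _ ![], finrank_span_eq_card hli, Fintype.card_fin]

theorem stmt8_general (N : ℕ) (p : Matrix (Fin N) (Fin N) ℂ)
    (hdet : IsUnit p.det)
    (b : Fin N → ℂ) (hb : star b ⬝ᵥ b = 1)
    (P : Matrix (Fin N) (Fin N) ℂ) (hP : P = 1 - Matrix.vecMulVec b (star b))
    (H : Matrix (Fin N ⊕ Fin N) (Fin N ⊕ Fin N) ℂ)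
    (hH : H = Matrix.fromBlocks 0 (p * P) (P * p) 0) :
    LinearMap.ker (Matrix.toLin' H) =
      Submodule.span ℂ {Sum.elim ((p⁻¹).mulVec b) (0 : Fin N → ℂ),
                        Sum.elim (0 : Fin N → ℂ) b}
    ∧ Module.finrank ℂ (LinearMap.ker (Matrix.toLin' H)) = 2 := by
  have hPker : LinearMap.ker P.mulVecLin = ℂ ∙ b := hP ▸ ker_mulVecLin_one_sub_vecMulVec hb
  have hker : LinearMap.ker (toLin' H) =
      span ℂ {Sum.elim (p⁻¹ *ᵥ b) 0, Sum.elim (0 : Fin N → ℂ) b} := by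
    rw [toLin'_apply', hH]
    exact ker_mulVecLin_fromBlocks_zero_zero
      (by rw [ker_mulVecLin_mul_of_isUnit_det_left hdet, hPker])
      (ker_mulVecLin_mul_of_isUnit_det_right hdet hPker)
  have hb0 : b ≠ 0 := by
    rintro rfl
    simp at hb
  have hpb0 : p⁻¹ *ᵥ b ≠ 0 := by
    have hinj := mulVec_injective_iff_isUnit.mpr ((isUnit_iff_isUnit_det _).mpr
      (isUnit_nonsing_inv_det p hdet))
    simpa using hinj.ne hb0
  exact ⟨hker, hker ▸ finrank_span_sumElim_pair hpb0 hb0⟩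

/-- The paper's claim for the adiabatic linear-systems solver: the zero-eigenvalue subspace
of the Hamiltonian `H = [[0, p·P], [P·p, 0]]` (with `P = I − b̄·b̄†` the projection onto the
orthogonal complement of the unit vector `b̄` and `p` Hermitian invertible) is exactly the
two-dimensional subspace spanned by `(p⁻¹·b̄, 0)` and `(0, b̄)`. -/
theorem stmt8 (N : ℕ) (hN : 1 ≤ N) (p : Matrix (Fin N) (Fin N) ℂ)
    (hp : p.IsHermitian) (hdet : IsUnit p.det)
    (b : Fin N → ℂ) (hb : star b ⬝ᵥ b = 1)
    (P : Matrix (Fin N) (Fin N) ℂ) (hP : P = 1 - Matrix.vecMulVec b (star b))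
    (H : Matrix (Fin N ⊕ Fin N) (Fin N ⊕ Fin N) ℂ)
    (hH : H = Matrix.fromBlocks 0 (p * P) (P * p) 0) :
    LinearMap.ker (Matrix.toLin' H) =
      Submodule.span ℂ {Sum.elim ((p⁻¹).mulVec b) (0 : Fin N → ℂ),
                        Sum.elim (0 : Fin N → ℂ) b}
    ∧ Module.finrank ℂ (LinearMap.ker (Matrix.toLin' H)) = 2 :=
  stmt8_general N p hdet b hb P hP H hH
end

section
/- For all real numbers t and θ and every natural number K: | e^{−i·t·cos θ} − ( J₀(t) + 2·∑_{k=1}^{K} (−i)^k · J_k(t) · cos(kθ) ) | ≤ 2 · e^{t²/4} · ∑_{k=K+1}^∞ (|t|/2)^k / k! ≤ 2 · e^{t²/4 + |t|/2} · (|t|/2)^{K+1} / (K+1)!. (This quantifies the truncation error |e^{−iλt} − e^{−iλ't}| of the K-th order generalized quantum signal processing approximation in Lemma A.4 of the paper, showing it decays super-exponentially in the truncation order K.) -/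
/-- The Bessel function of the first kind of nonnegative integer order:
`J_k(t) = ∑_{m=0}^∞ ((−1)^m / (m!·(m+k)!)) · (t/2)^{2m+k}`. -/
noncomputable def besselJ (k : ℕ) (t : ℝ) : ℝ :=
  ∑' m : ℕ, ((-1:ℝ)^m / ((Nat.factorial m : ℝ) * (Nat.factorial (m + k) : ℝ))) * (t/2)^(2*m+k)

/-!
Multiplying the exponential series of `(t/2) w` and `-(t/2) w⁻¹` and grouping the terms
`(a, b)` by `a - b` gives the generating function `exp ((t/2) (w - w⁻¹)) = ∑_{k ∈ ℤ} J_k(t) w^k`,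
with `J_{-k} = (-1)^k J_k`. At `w = -i e^{iθ}` the terms `k` and `-k` combine to
`2 (-i)^k J_k(t) cos (kθ)`, which is the Jacobi–Anger expansion of `e^{-i t cos θ}`; the error
is its tail. Termwise, `|J_k(t)| ≤ e^{t²/4} (|t|/2)^k / k!` since `(m+k)! ≥ k!`, and the tail of
the exponential series is bounded using `(k+N)! ≥ k! N!`.
-/

open Nat Complex

lemma Real.hasSum_pow_div_factorial (x : ℝ) : HasSum (fun n : ℕ => x ^ n / n !) (Real.exp x) := by
  rw [Real.exp_eq_exp_ℝ]
  exact NormedSpace.expSeries_div_hasSum_exp x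

lemma Complex.hasSum_pow_div_factorial (z : ℂ) :
    HasSum (fun n : ℕ => z ^ n / (n ! : ℂ)) (exp z) := by
  rw [Complex.exp_eq_exp_ℂ]
  exact NormedSpace.expSeries_div_hasSum_exp z

lemma Complex.hasSum_pow_div_factorial_mul_pow_div_factorial (x y : ℂ) :
    HasSum (fun p : ℕ × ℕ => x ^ p.1 / (p.1 ! : ℂ) * (y ^ p.2 / (p.2 ! : ℂ))) (exp (x + y)) := by
  have hsum := summable_mul_of_summable_norm (NormedSpace.norm_expSeries_div_summable x)
    (NormedSpace.norm_expSeries_div_summable y)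
  have h := (hasSum_pow_div_factorial x).mul (hasSum_pow_div_factorial y) hsum
  rwa [← exp_add] at h

namespace besselJ

noncomputable def term (k m : ℕ) (t : ℝ) : ℝ :=
  (-1) ^ m / (m ! * (m + k)! : ℝ) * (t / 2) ^ (2 * m + k)

lemma eq_tsum_term (k : ℕ) (t : ℝ) : besselJ k t = ∑' m, term k m t := rfl

lemma abs_term_le (k m : ℕ) (t : ℝ) :
    |term k m t| ≤ (t ^ 2 / 4) ^ m / m ! * ((|t| / 2) ^ k / k !) := by
  have hfac : (k ! : ℝ) ≤ (m + k)! := mod_cast Nat.factorial_le (Nat.le_add_left k m)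
  have hpow : (|t| / 2) ^ (2 * m + k) = (t ^ 2 / 4) ^ m * (|t| / 2) ^ k := by
    rw [pow_add, pow_mul, div_pow |t|, sq_abs]; norm_num
  calc |term k m t| = (t ^ 2 / 4) ^ m * (|t| / 2) ^ k / (m ! * (m + k)!) := by
        simp only [term, abs_mul, abs_div, abs_pow, abs_neg, abs_one, one_pow, abs_cast,
          abs_ofNat, hpow]
        ring
    _ ≤ (t ^ 2 / 4) ^ m * (|t| / 2) ^ k / (m ! * k !) := by gcongr
    _ = _ := by ring

lemma summable_term (k : ℕ) (t : ℝ) : Summable (fun m => term k m t) :=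
  .of_norm_bounded ((Real.summable_pow_div_factorial _).mul_right _) (abs_term_le k · t)

end besselJ

open besselJ

lemma abs_besselJ_le (k : ℕ) (t : ℝ) :
    |besselJ k t| ≤ Real.exp (t ^ 2 / 4) * ((|t| / 2) ^ k / k !) := by
  rw [eq_tsum_term, ← Real.norm_eq_abs]
  exact tsum_of_norm_bounded ((Real.hasSum_pow_div_factorial _).mul_right _) (abs_term_le k · t)

noncomputable def besselJInt : ℤ → ℝ → ℝ
  | (n : ℕ), t => besselJ n t
  | .negSucc n, t => (-1) ^ (n + 1) * besselJ (n + 1) t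

lemma besselJInt_natCast (n : ℕ) (t : ℝ) : besselJInt n t = besselJ n t := rfl

lemma besselJInt_neg_natCast (n : ℕ) (t : ℝ) : besselJInt (-n) t = (-1) ^ n * besselJ n t := by
  cases n with
  | zero => simp only [CharP.cast_eq_zero, neg_zero, pow_zero, one_mul]; rfl
  | succ n => rfl

namespace besselJ

noncomputable def pairCoeff (a b : ℕ) (t : ℝ) : ℝ :=
  (-1) ^ b * (t / 2) ^ (a + b) / (a ! * b !)

lemma pairCoeff_add_left (j m : ℕ) (t : ℝ) : pairCoeff (m + j) m t = term j m t := by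
  rw [pairCoeff, term]; ring

lemma pairCoeff_add_right (j m : ℕ) (t : ℝ) : pairCoeff m (m + j) t = (-1) ^ j * term j m t := by
  rw [pairCoeff, term]; ring

lemma hasSum_pairCoeff_besselJInt (k : ℤ) (t : ℝ) :
    HasSum (fun m => pairCoeff (m + k.toNat) (m + (-k).toNat) t) (besselJInt k t) := by
  cases k with
  | ofNat j =>
    simpa [pairCoeff_add_left, besselJInt, eq_tsum_term] using (summable_term j t).hasSum
  | negSucc j =>
    simpa [pairCoeff_add_right, besselJInt, eq_tsum_term] using
      (summable_term (j + 1) t).hasSum.mul_left ((-1) ^ (j + 1))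

lemma pow_div_factorial_mul_pow_div_factorial {w : ℂ} (hw : w ≠ 0) (t : ℝ) (a b : ℕ) :
    (t / 2 * w) ^ a / a ! * ((-(t / 2) * w⁻¹) ^ b / b !) =
      w ^ ((a : ℤ) - b) * pairCoeff a b t := by
  rw [zpow_sub₀ hw, zpow_natCast, zpow_natCast, pairCoeff, mul_pow, mul_pow, neg_pow, inv_pow]
  push_cast
  field_simp
  ring

end besselJ

def pairEquivDiffMin : ℤ × ℕ ≃ ℕ × ℕ where
  toFun q := (q.2 + q.1.toNat, q.2 + (-q.1).toNat)
  invFun p := ((p.1 : ℤ) - p.2, min p.1 p.2)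
  left_inv := by
    rintro ⟨k, m⟩
    simp only [Prod.mk.injEq]
    constructor <;> omega
  right_inv := by
    rintro ⟨a, b⟩
    simp only [Prod.mk.injEq]
    constructor <;> omega

lemma pairEquivDiffMin_apply (k : ℤ) (m : ℕ) :
    pairEquivDiffMin (k, m) = (m + k.toNat, m + (-k).toNat) := rfl

theorem hasSum_zpow_mul_besselJInt (t : ℝ) {w : ℂ} (hw : w ≠ 0) :
    HasSum (fun k : ℤ => w ^ k * besselJInt k t) (exp (t / 2 * (w - w⁻¹))) := by
  have hprod := hasSum_pow_div_factorial_mul_pow_div_factorial (t / 2 * w) (-(t / 2) * w⁻¹)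
  rw [show (t / 2 * w + -(t / 2) * w⁻¹ : ℂ) = t / 2 * (w - w⁻¹) by ring] at hprod
  refine (pairEquivDiffMin.hasSum_iff.2 hprod).prod_fiberwise fun k => ?_
  have hdiff (m : ℕ) : ((m + k.toNat : ℕ) : ℤ) - (m + (-k).toNat : ℕ) = k := by omega
  simp only [Function.comp_def, pairEquivDiffMin_apply,
    pow_div_factorial_mul_pow_div_factorial hw, hdiff]
  exact (hasSum_ofReal.2 (hasSum_pairCoeff_besselJInt k t)).mul_left (w ^ k)

theorem hasSum_pow_add_neg_inv_pow_mul_besselJ (t : ℝ) {w : ℂ} (hw : w ≠ 0) :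
    HasSum (fun n : ℕ => (w ^ n + (-w⁻¹) ^ n) * besselJ n t)
      (exp (t / 2 * (w - w⁻¹)) + besselJ 0 t) := by
  convert (hasSum_zpow_mul_besselJInt t hw).nat_add_neg using 1
  · funext n
    rw [zpow_neg, zpow_natCast, besselJInt_neg_natCast, besselJInt_natCast, neg_pow, inv_pow]
    push_cast
    ring
  · rw [zpow_zero, one_mul]; rfl

lemma neg_I_mul_exp_pow_add_neg_inv_pow (θ : ℝ) (n : ℕ) :
    (-I * exp (θ * I)) ^ n + (-(-I * exp (θ * I))⁻¹) ^ n = 2 * (-I) ^ n * Real.cos (n * θ) := by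
  have hinv : -(-I * exp (θ * I))⁻¹ = -I * exp (-θ * I) := by
    rw [mul_inv, inv_neg, inv_I, ← exp_neg]
    simp only [neg_neg, neg_mul]
  rw [hinv, mul_pow, mul_pow, ← exp_nat_mul, ← exp_nat_mul, ofReal_cos, Complex.cos]
  push_cast
  ring_nf

theorem hasSum_jacobiAnger (t θ : ℝ) :
    HasSum (fun n : ℕ => 2 * ((-I) ^ n * besselJ n t * Real.cos (n * θ)))
      (exp (-I * t * Real.cos θ) + besselJ 0 t) := by
  have hw : -I * exp (θ * I) ≠ 0 := mul_ne_zero (neg_ne_zero.2 I_ne_zero) (exp_ne_zero _)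
  have hsum := hasSum_pow_add_neg_inv_pow_mul_besselJ t hw
  have harg : (t / 2 * (-I * exp (θ * I) - (-I * exp (θ * I))⁻¹) : ℂ) = -I * t * Real.cos θ := by
    have h1 := neg_I_mul_exp_pow_add_neg_inv_pow θ 1
    simp only [pow_one, Nat.cast_one, one_mul] at h1
    rw [sub_eq_add_neg, h1]
    ring
  simp only [neg_I_mul_exp_pow_add_neg_inv_pow, harg] at hsum
  convert hsum using 2 with n
  ring

lemma norm_jacobiAnger_term_le (t θ : ℝ) (n : ℕ) :
    ‖2 * ((-I) ^ n * besselJ n t * Real.cos (n * θ))‖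
      ≤ 2 * Real.exp (t ^ 2 / 4) * ((|t| / 2) ^ n / n !) := by
  rw [norm_mul, norm_mul, norm_mul, norm_pow, norm_neg, norm_I, one_pow, one_mul, norm_real,
    norm_real, Real.norm_eq_abs, Real.norm_eq_abs, Complex.norm_ofNat, mul_assoc]
  calc 2 * (|besselJ n t| * |Real.cos (n * θ)|) ≤ 2 * (|besselJ n t| * 1) := by
        gcongr; exact Real.abs_cos_le_one _
    _ ≤ _ := by rw [mul_one]; gcongr; exact abs_besselJ_le n t

lemma tsum_pow_div_factorial_nat_add_le {x : ℝ} (hx : 0 ≤ x) (N : ℕ) :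
    ∑' k, x ^ (k + N) / (k + N)! ≤ x ^ N / N ! * Real.exp x := by
  refine hasSum_le (fun k => ?_)
    ((summable_nat_add_iff N).2 (Real.summable_pow_div_factorial x)).hasSum
    ((Real.hasSum_pow_div_factorial x).mul_left _)
  have hfac : (N ! * k ! : ℝ) ≤ (k + N)! := by
    rw [add_comm]
    exact_mod_cast Nat.le_of_dvd (Nat.factorial_pos _)
      (Nat.factorial_mul_factorial_dvd_factorial_add N k)
  calc x ^ (k + N) / (k + N)! ≤ x ^ (k + N) / (N ! * k !) := by gcongr
    _ = _ := by rw [pow_add]; ring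

lemma Finset.sum_range_succ_eq_add_sum_Icc {M : Type*} [AddCommMonoid M] (f : ℕ → M) (K : ℕ) :
    ∑ i ∈ Finset.range (K + 1), f i = f 0 + ∑ i ∈ Finset.Icc 1 K, f i := by
  rw [Finset.range_eq_Ico, Finset.sum_eq_sum_Ico_succ_bot (by omega : 0 < K + 1), zero_add,
    Finset.Ico_add_one_right_eq_Icc]

lemma hasSum_jacobiAnger_tail (t θ : ℝ) (K : ℕ) :
    HasSum (fun n : ℕ => 2 * ((-I) ^ (n + (K + 1)) * besselJ (n + (K + 1)) t *
        Real.cos ((n + (K + 1) : ℕ) * θ)))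
      (exp (-I * t * Real.cos θ) -
        (besselJ 0 t + 2 * ∑ k ∈ Finset.Icc 1 K, (-I) ^ k * besselJ k t * Real.cos (k * θ))) := by
  have h := (hasSum_nat_add_iff' (K + 1)).2 (hasSum_jacobiAnger t θ)
  rw [Finset.sum_range_succ_eq_add_sum_Icc, ← Finset.mul_sum] at h
  simp only [pow_zero, CharP.cast_eq_zero, zero_mul, Real.cos_zero, ofReal_one, one_mul,
    mul_one] at h
  rwa [show ∀ E J S : ℂ, E + J - (2 * J + S) = E - (J + S) from fun _ _ _ => by ring] at h

/-- The truncation error of the `K`-th order generalized quantum signal processing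
approximation in Lemma A.4 of the paper:
`|e^{−i t cos θ} − (J₀(t) + 2 ∑_{k=1}^K (−i)^k J_k(t) cos(kθ))|
  ≤ 2 e^{t²/4} ∑_{k=K+1}^∞ (|t|/2)^k/k! ≤ 2 e^{t²/4+|t|/2} (|t|/2)^{K+1}/(K+1)!`. -/
theorem stmt13 (t θ : ℝ) (K : ℕ) :
    ‖Complex.exp (-Complex.I * (t : ℂ) * ((Real.cos θ : ℝ) : ℂ)) -
        (((besselJ 0 t : ℝ) : ℂ) + 2 * ∑ k ∈ Finset.Icc 1 K,
          (-Complex.I)^k * ((besselJ k t : ℝ) : ℂ) * ((Real.cos ((k:ℝ)*θ) : ℝ) : ℂ))‖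
      ≤ 2 * Real.exp (t^2/4) * ∑' k : ℕ, (|t|/2)^(k+K+1) / (Nat.factorial (k+K+1) : ℝ)
    ∧ 2 * Real.exp (t^2/4) * (∑' k : ℕ, (|t|/2)^(k+K+1) / (Nat.factorial (k+K+1) : ℝ))
      ≤ 2 * Real.exp (t^2/4 + |t|/2) * (|t|/2)^(K+1) / (Nat.factorial (K+1) : ℝ) := by
  have hbound : HasSum
      (fun k : ℕ => 2 * Real.exp (t ^ 2 / 4) * ((|t| / 2) ^ (k + K + 1) / (k + K + 1)!))
      (2 * Real.exp (t ^ 2 / 4) * ∑' k : ℕ, (|t| / 2) ^ (k + K + 1) / (k + K + 1)!) :=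
    ((summable_nat_add_iff (K + 1)).2
      (Real.summable_pow_div_factorial (|t| / 2))).hasSum.mul_left _
  constructor
  · exact (hasSum_jacobiAnger_tail t θ K).norm_le_of_bounded hbound
      fun n => norm_jacobiAnger_term_le t θ (n + (K + 1))
  · calc _ ≤ 2 * Real.exp (t ^ 2 / 4) * ((|t| / 2) ^ (K + 1) / (K + 1)! * Real.exp (|t| / 2)) := by
          gcongr
          exact tsum_pow_div_factorial_nat_add_le (by positivity) (K + 1)
      _ = _ := by rw [Real.exp_add]; ring
end

section
/- Let A and B be n×n complex Hermitian matrices and t a real number. Then the first-order Trotter product formula satisfies ‖ exp(−i·t·(A + B)) − exp(−i·t·A) · exp(−i·t·B) ‖ ≤ (t²/2) · ‖ A·B − B·A ‖, where exp is the matrix exponential and ‖·‖ is the operator (spectral) norm on n×n complex matrices. (This is the first-order instance of Lemma A.2 of the paper, the Trotter error bound with commutator scaling ‖𝒜(t)‖ = O(α_comm · t²), which controls the per-step Hamiltonian-simulation residual in Theorem 2.) -/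
/-! For skew-adjoint `x`, `y` in a C⋆-algebra consider the Trotter defect
`W s = exp (-s (x + y)) * exp (s x) * exp (s y)`. Then `W 0 = 1` and
`W' s = exp (-s (x + y)) * [exp (s x), y] * exp (s y)`, whose outer factors are unitary.
Differentiating `u ↦ exp (u x) * y * exp ((1 - u) x)` shows `‖[exp x, y]‖ ≤ ‖[x, y]‖`,
hence `‖W' s‖ ≤ s ‖[x, y]‖` and `‖W 1 - 1‖ ≤ ‖[x, y]‖ / 2`. Since
`exp (x + y) - exp x * exp y = exp (x + y) * (1 - W 1)`, the Trotter error obeys the same bound;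
the theorem is the case `x = -i t A`, `y = -i t B`, for which `‖[x, y]‖ = t² ‖[A, B]‖`. -/

open scoped Matrix

/-- The operator (spectral) norm of a square complex matrix, i.e. the norm of its action on
Euclidean space. -/
noncomputable def opNorm {n : ℕ} (M : Matrix (Fin n) (Fin n) ℂ) : ℝ :=
  ‖Matrix.toEuclideanCLM (𝕜 := ℂ) M‖

section BanachAlgebra

open NormedSpace

variable {A : Type*} [NormedRing A] [NormedAlgebra ℝ A] [CompleteSpace A]

theorem hasDerivAt_exp_smul_mul_mul_exp_one_sub_smul (x y : A) (u : ℝ) :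
    HasDerivAt (fun u : ℝ => exp (u • x) * y * exp ((1 - u) • x))
      (exp (u • x) * (x * y - y * x) * exp ((1 - u) • x)) u := by
  have h_rev : HasDerivAt (fun u : ℝ => exp ((1 - u) • x))
      ((-1 : ℝ) • (x * exp ((1 - u) • x))) u :=
    (hasDerivAt_exp_smul_const' x (1 - u)).scomp u ((hasDerivAt_id u).const_sub 1)
  refine (((hasDerivAt_exp_smul_const x u).mul_const y).mul h_rev).congr_deriv ?_
  rw [neg_one_smul]
  noncomm_ring

theorem hasDerivAt_exp_smul_neg_add_mul_exp_smul_mul_exp_smul (x y : A) (s : ℝ) :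
    HasDerivAt (fun s : ℝ => exp (s • -(x + y)) * exp (s • x) * exp (s • y))
      (exp (s • -(x + y)) * (exp (s • x) * y - y * exp (s • x)) * exp (s • y)) s := by
  refine (((hasDerivAt_exp_smul_const (-(x + y)) s).mul (hasDerivAt_exp_smul_const x s)).mul
    (hasDerivAt_exp_smul_const y s)).congr_deriv ?_
  simp only [Pi.mul_apply, ((Commute.refl x).smul_left s).exp_left.eq,
    ((Commute.refl y).smul_left s).exp_left.eq]
  noncomm_ring

end BanachAlgebra

section CStarAlgebra

open NormedSpace

variable {A : Type*} [CStarAlgebra A]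

theorem norm_unitary_mul_mul_unitary {u v : A} (hu : u ∈ unitary A) (hv : v ∈ unitary A)
    (m : A) : ‖u * m * v‖ = ‖m‖ := by
  rw [CStarRing.norm_mul_mem_unitary _ hv, CStarRing.norm_mem_unitary_mul _ hu]

theorem exp_smul_mem_unitary {x : A} (hx : x ∈ skewAdjoint A) (s : ℝ) :
    exp (s • x) ∈ unitary A :=
  let +nondep : NormedAlgebra ℚ A := .restrictScalars ℚ ℂ A
  exp_mem_unitary_of_mem_skewAdjoint (skewAdjoint.smul_mem s hx)

theorem norm_exp_mul_sub_mul_exp_le {x : A} (hx : x ∈ skewAdjoint A) (y : A) :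
    ‖exp x * y - y * exp x‖ ≤ ‖x * y - y * x‖ := by
  have h := norm_image_sub_le_of_norm_deriv_le_segment_01'
    (fun u _ => (hasDerivAt_exp_smul_mul_mul_exp_one_sub_smul x y u).hasDerivWithinAt)
    (fun u _ => (norm_unitary_mul_mul_unitary (exp_smul_mem_unitary hx u)
      (exp_smul_mem_unitary hx (1 - u)) _).le)
  simpa using h

theorem norm_exp_smul_neg_add_mul_commutator_mul_exp_smul_le {x y : A}
    (hx : x ∈ skewAdjoint A) (hy : y ∈ skewAdjoint A) {s : ℝ} (hs : 0 ≤ s) :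
    ‖exp (s • -(x + y)) * (exp (s • x) * y - y * exp (s • x)) * exp (s • y)‖
      ≤ s * ‖x * y - y * x‖ := by
  rw [norm_unitary_mul_mul_unitary (exp_smul_mem_unitary (neg_mem (add_mem hx hy)) s)
    (exp_smul_mem_unitary hy s)]
  calc ‖exp (s • x) * y - y * exp (s • x)‖ ≤ ‖(s • x) * y - y * (s • x)‖ :=
        norm_exp_mul_sub_mul_exp_le (skewAdjoint.smul_mem s hx) y
    _ = s * ‖x * y - y * x‖ := by
      rw [smul_mul_assoc, mul_smul_comm, ← smul_sub, norm_smul, Real.norm_of_nonneg hs]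

theorem norm_exp_add_sub_exp_mul_exp_le {x y : A} (hx : x ∈ skewAdjoint A)
    (hy : y ∈ skewAdjoint A) :
    ‖exp (x + y) - exp x * exp y‖ ≤ ‖x * y - y * x‖ / 2 := by
  let +nondep : NormedAlgebra ℚ A := .restrictScalars ℚ ℂ A
  set W : ℝ → A := fun s => exp (s • -(x + y)) * exp (s • x) * exp (s • y)
  set K := ‖x * y - y * x‖
  have hW : ∀ s, HasDerivAt W _ s := hasDerivAt_exp_smul_neg_add_mul_exp_smul_mul_exp_smul x y
  have h_defect : ‖W 1 - 1‖ ≤ 1 ^ 2 / 2 * K := by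
    refine image_norm_le_of_norm_deriv_right_le_deriv_boundary (f := fun s => W s - 1)
      (B := fun s => s ^ 2 / 2 * K) (B' := fun s => s * K) ?_ (fun s _ => ?_) ?_ (fun s => ?_)
      (fun s hs => norm_exp_smul_neg_add_mul_commutator_mul_exp_smul_le hx hy hs.1)
      (Set.right_mem_Icc.2 zero_le_one)
    · exact (continuous_iff_continuousAt.2 fun s => (hW s).continuousAt).continuousOn.sub
        continuousOn_const
    · exact ((hW s).sub_const 1).hasDerivWithinAt
    · simp [W]
    · refine (((hasDerivAt_pow 2 s).div_const 2).mul_const K).congr_deriv ?_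
      push_cast
      ring
  have h_factor : exp (x + y) - exp x * exp y = exp (x + y) * (1 - W 1) := by
    simp only [W, one_smul, mul_sub, mul_one, ← mul_assoc]
    rw [← exp_add_of_commute (Commute.refl _).neg_right, add_neg_cancel, exp_zero, one_mul]
  have h_unitary : exp (x + y) ∈ unitary A := by
    simpa using exp_smul_mem_unitary (add_mem hx hy) 1
  rw [h_factor, CStarRing.norm_mem_unitary_mul _ h_unitary, norm_sub_rev]
  simpa [div_eq_inv_mul] using h_defect

theorem norm_exp_smul_add_sub_exp_smul_mul_exp_smul_le {a b : A}
    (ha : IsSelfAdjoint a) (hb : IsSelfAdjoint b) (t : ℝ) :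
    ‖exp ((-(Complex.I * t)) • (a + b)) -
        exp ((-(Complex.I * t)) • a) * exp ((-(Complex.I * t)) • b)‖
      ≤ t ^ 2 / 2 * ‖a * b - b * a‖ := by
  set c : ℂ := -(Complex.I * t)
  have hc : c ∈ skewAdjoint ℂ := by simp [skewAdjoint.mem_iff, c]
  have h := norm_exp_add_sub_exp_mul_exp_le (ha.smul_mem_skewAdjoint hc)
    (hb.smul_mem_skewAdjoint hc)
  have h_comm : (c • a) * (c • b) - (c • b) * (c • a) = (c * c) • (a * b - b * a) := by
    rw [smul_mul_smul_comm, smul_mul_smul_comm, smul_sub]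
  have hc_norm : ‖c‖ = |t| := by simp [c]
  rw [← smul_add, h_comm, norm_smul, norm_mul, hc_norm, ← abs_mul, abs_mul_self, ← sq] at h
  linarith

end CStarAlgebra

/-- The first-order instance of Lemma A.2 of the paper (Trotter error bound with commutator
scaling): for Hermitian `A`, `B` and real `t`,
`‖exp(−it(A+B)) − exp(−itA)·exp(−itB)‖ ≤ (t²/2)·‖AB − BA‖` in the operator norm. -/
theorem stmt15 (n : ℕ) (A B : Matrix (Fin n) (Fin n) ℂ)
    (hA : A.IsHermitian) (hB : B.IsHermitian) (t : ℝ) :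
    opNorm (NormedSpace.exp ((-(Complex.I * (t : ℂ))) • (A + B)) -
        NormedSpace.exp ((-(Complex.I * (t : ℂ))) • A) *
          NormedSpace.exp ((-(Complex.I * (t : ℂ))) • B))
      ≤ t^2/2 * opNorm (A * B - B * A) := by
  open scoped Matrix.Norms.L2Operator in
  exact norm_exp_smul_add_sub_exp_smul_mul_exp_smul_le hA.isSelfAdjoint hB.isSelfAdjoint t
end
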